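/- Let 0<α<1 and define ρ on (−1,∞) by ρ(t)=Γ(t+1)/Γ(t+1−α) for t≠α−1 (with Γ(t+1−α) for −1<t<α−1 given by the meromorphic continuation of the Gamma function) and ρ(α−1)=0. Then ρ is continuous and strictly monotone increasing on (−1,∞), ρ(t)→−∞ as t→−1+, and ρ(t)→+∞ as t→+∞; hence ρ is a bijection from (−1,∞) onto ℝ, and in particular for every λ∈ℝ the equation Γ(t+1)/Γ(t+1−α)=λ has a unique solution t=γ(λ) in (−1,∞). -/

import Mathlib

open Filter

/-- The function `ρ(t) = Γ(t+1)/Γ(t+1-α)` on `(-1,∞)`.  Here `Real.Gamma` is the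
meromorphically continued Gamma function, which vanishes at its poles; hence at the
pole `t = α - 1` of the denominator this definition automatically yields `ρ(α-1) = 0`,
as required. -/
noncomputable def rhoGamma (α t : ℝ) : ℝ :=
  Real.Gamma (t + 1) / Real.Gamma (t + 1 - α)

/-!
Write `R_h(x) = Γ(x + h) / Γ(x)`. Log-convexity of `Γ` makes the increments of `log Γ` over
intervals of fixed length `h` increase, so `R_h` is increasing on `(0, ∞)`; the recursion
`R_h(x + 1) = (1 + h / x) R_h(x)` then forces strict increase. Now `ρ(t) = R_α(t + 1 - α)`
handles `[α - 1, ∞)`, while on `(-1, α - 1]` the identity `ρ(t) = (t + 1 - α) / R_{1-α}(t + 1)`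
exhibits `ρ` as a nonpositive increasing numerator over a positive increasing denominator.
The pole of `Γ` at `0` gives `R_{1-α}(x) → 0⁺` as `x → 0⁺`, hence `ρ → -∞` at `-1⁺`, and
log-convexity once more gives `ρ(t) ≥ t ^ α` for `t > 0`. Surjectivity is the intermediate value
theorem.
-/

open Set Topology

theorem ConvexOn.map_add_sub_map_le {𝕜 : Type*} [Field 𝕜] [LinearOrder 𝕜]
    [IsStrictOrderedRing 𝕜] {s : Set 𝕜} {f : 𝕜 → 𝕜} (hf : ConvexOn 𝕜 s f) {x y h : 𝕜}
    (hx : x ∈ s) (hyh : y + h ∈ s) (hxy : x ≤ y) (hh : 0 ≤ h) :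
    f (x + h) - f x ≤ f (y + h) - f y := by
  rcases hh.eq_or_lt with rfl | hh
  · simp
  have hxh : x + h ∈ s := hf.1.ordConnected.out hx hyh ⟨by linarith, by linarith⟩
  have hy : y ∈ s := hf.1.ordConnected.out hx hyh ⟨hxy, by linarith⟩
  have hleft : slope f x (x + h) ≤ slope f x (y + h) :=
    hf.slope_mono hx ⟨hxh, by simpa using hh.ne'⟩
      ⟨hyh, by simp only [mem_singleton_iff]; linarith⟩ (by linarith)
  have hright : slope f (y + h) x ≤ slope f (y + h) y :=
    hf.slope_mono hyh ⟨hx, by simp only [mem_singleton_iff]; linarith⟩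
      ⟨hy, by simp only [mem_singleton_iff]; linarith⟩ hxy
  have hslope : slope f x (x + h) ≤ slope f y (y + h) := by
    rw [slope_comm f (y + h), slope_comm f (y + h)] at hright
    exact hleft.trans hright
  rwa [slope_def_field, slope_def_field, add_sub_cancel_left, add_sub_cancel_left,
    div_le_div_iff_of_pos_right hh] at hslope

namespace Real

theorem continuousAt_Gamma_of_pos {x : ℝ} (hx : 0 < x) : ContinuousAt Gamma x :=
  differentiableOn_Gamma_Ioi.continuousOn.continuousAt (Ioi_mem_nhds hx)

theorem tendsto_Gamma_add_nhds_zero {a : ℝ} (ha : 0 < a) :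
    Tendsto (fun x => Gamma (x + a)) (𝓝 0) (𝓝 (Gamma a)) :=
  (continuousAt_Gamma_of_pos ha).tendsto.comp ((continuous_add_const a).tendsto' 0 a (zero_add a))

theorem tendsto_Gamma_nhdsGT_zero : Tendsto Gamma (𝓝[>] 0) atTop := by
  have hshift := (tendsto_Gamma_add_nhds_zero one_pos).mono_left (nhdsWithin_le_nhds (s := Ioi 0))
  rw [Gamma_one] at hshift
  refine (hshift.pos_mul_atTop one_pos tendsto_inv_nhdsGT_zero).congr' ?_
  filter_upwards [self_mem_nhdsWithin] with x (hx : 0 < x)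
  rw [Gamma_add_one hx.ne', mul_comm x, mul_inv_cancel_right₀ hx.ne']

-- At the poles `x = 0, -1, …` both `Gamma x` and the quotient are `0` in Lean.
noncomputable def gammaRatio (h x : ℝ) : ℝ := Gamma (x + h) / Gamma x

variable {h x : ℝ}

theorem gammaRatio_zero (h : ℝ) : gammaRatio h 0 = 0 := by
  simp [gammaRatio]

theorem gammaRatio_pos (hx : 0 < x) (hxh : 0 < x + h) : 0 < gammaRatio h x :=
  div_pos (Gamma_pos_of_pos hxh) (Gamma_pos_of_pos hx)

theorem gammaRatio_add_one (hx : x ≠ 0) (hxh : x + h ≠ 0) :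
    gammaRatio h (x + 1) = (x + h) / x * gammaRatio h x := by
  rw [gammaRatio, gammaRatio, add_right_comm, Gamma_add_one hxh, Gamma_add_one hx,
    mul_div_mul_comm]

theorem continuousOn_gammaRatio (hh : 0 ≤ h) : ContinuousOn (gammaRatio h) (Ioi 0) := by
  intro x (hx : 0 < x)
  refine ContinuousAt.continuousWithinAt (ContinuousAt.div ?_
    (continuousAt_Gamma_of_pos hx) (Gamma_pos_of_pos hx).ne')
  exact (continuousAt_Gamma_of_pos (by linarith)).comp (continuous_add_const h).continuousAt

theorem tendsto_gammaRatio_nhdsGT_zero (hh : 0 < h) :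
    Tendsto (gammaRatio h) (𝓝[>] 0) (𝓝[>] 0) := by
  have hnum := (tendsto_Gamma_add_nhds_zero hh).mono_left (nhdsWithin_le_nhds (s := Ioi 0))
  refine tendsto_nhdsWithin_iff.2 ⟨?_, ?_⟩
  · have := hnum.mul tendsto_Gamma_nhdsGT_zero.inv_tendsto_atTop
    rwa [mul_zero] at this
  · filter_upwards [self_mem_nhdsWithin] with x (hx : 0 < x)
    exact gammaRatio_pos hx (by linarith)

theorem monotoneOn_gammaRatio (hh : 0 ≤ h) : MonotoneOn (gammaRatio h) (Ioi 0) := by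
  intro x (hx : 0 < x) y (hy : 0 < y) hxy
  have hlog := convexOn_log_Gamma.map_add_sub_map_le hx
    (show y + h ∈ Ioi 0 by simp; linarith) hxy hh
  simp only [Function.comp_apply] at hlog
  rw [← log_div (Gamma_pos_of_pos (by linarith)).ne' (Gamma_pos_of_pos hx).ne',
    ← log_div (Gamma_pos_of_pos (by linarith)).ne' (Gamma_pos_of_pos hy).ne'] at hlog
  exact (log_le_log_iff (gammaRatio_pos hx (by linarith)) (gammaRatio_pos hy (by linarith))).1 hlog

theorem strictMonoOn_gammaRatio (hh : 0 < h) : StrictMonoOn (gammaRatio h) (Ici 0) := by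
  intro x (hx : 0 ≤ x) y (hy : 0 ≤ y) hxy
  have hy : 0 < y := hx.trans_lt hxy
  rcases hx.eq_or_lt with rfl | hx
  · rw [gammaRatio_zero]
    exact gammaRatio_pos hy (by linarith)
  by_contra! hyx
  have heq : gammaRatio h x = gammaRatio h y :=
    le_antisymm (monotoneOn_gammaRatio hh.le hx hy hxy.le) hyx
  -- Equality at `x < y` is ruled out by the recursion at `x + 1 < y + 1`, since `(x + h) / x` is
  -- strictly decreasing.
  have hshift := monotoneOn_gammaRatio hh.le (show x + 1 ∈ Ioi 0 by simp; linarith)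
    (show y + 1 ∈ Ioi 0 by simp; linarith) (by linarith)
  rw [gammaRatio_add_one hx.ne' (by linarith), gammaRatio_add_one hy.ne' (by linarith), heq,
    mul_le_mul_iff_left₀ (gammaRatio_pos hy (by linarith)), div_le_div_iff₀ hx hy] at hshift
  nlinarith

theorem rpow_le_gammaRatio (h0 : 0 < h) (h1 : h < 1) (hx : 1 < x + h) :
    (x + h - 1) ^ h ≤ gammaRatio h x := by
  set s := x + h - 1 with hs_def
  have hs : 0 < s := by linarith
  have hlogconv := Gamma_mul_add_mul_le_rpow_Gamma_mul_rpow_Gamma hs (show 0 < s + 1 by linarith)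
    h0 (sub_pos.2 h1) (add_sub_cancel h 1)
  rw [show h * s + (1 - h) * (s + 1) = x by rw [hs_def]; ring, Gamma_add_one hs.ne'] at hlogconv
  have hΓs := Gamma_pos_of_pos hs
  rw [gammaRatio, show x + h = s + 1 by rw [hs_def]; ring, Gamma_add_one hs.ne',
    le_div_iff₀ (Gamma_pos_of_pos (by linarith))]
  calc s ^ h * Gamma x ≤ s ^ h * (Gamma s ^ h * (s * Gamma s) ^ (1 - h)) := by gcongr
    _ = s ^ (h + (1 - h)) * Gamma s ^ (h + (1 - h)) := by
      rw [mul_rpow hs.le hΓs.le, rpow_add hs, rpow_add hΓs]; ring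
    _ = s * Gamma s := by simp

end Real

open Real

variable {α : ℝ}

theorem rhoGamma_eq_gammaRatio (t : ℝ) : rhoGamma α t = gammaRatio α (t + 1 - α) := by
  rw [rhoGamma, gammaRatio, sub_add_cancel]

theorem rhoGamma_eq_div_gammaRatio (t : ℝ) :
    rhoGamma α t = (t + 1 - α) / gammaRatio (1 - α) (t + 1) := by
  rw [rhoGamma, gammaRatio, show t + 1 + (1 - α) = t + 1 - α + 1 by ring, div_div_eq_mul_div]
  by_cases hc : t + 1 - α = 0
  · simp [hc]
  · rw [Gamma_add_one hc, mul_div_mul_left _ _ hc]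

theorem continuousOn_rhoGamma (hα1 : α ≤ 1) : ContinuousOn (rhoGamma α) (Ioi (-1)) := by
  have hR : ContinuousOn (fun t => gammaRatio (1 - α) (t + 1)) (Ioi (-1)) :=
    (continuousOn_gammaRatio (by linarith)).comp (continuous_add_const 1).continuousOn
      fun t (ht : -1 < t) => show 0 < t + 1 by linarith
  refine ContinuousOn.congr ((continuousOn_id.add continuousOn_const).sub continuousOn_const
    |>.div hR fun t (ht : -1 < t) => (gammaRatio_pos (by linarith) (by linarith)).ne')
    fun t _ => rhoGamma_eq_div_gammaRatio t

theorem strictMonoOn_rhoGamma_Ioc (hα1 : α ≤ 1) :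
    StrictMonoOn (rhoGamma α) (Ioc (-1) (α - 1)) := by
  intro s hs t ht hst
  have hRs : 0 < gammaRatio (1 - α) (s + 1) :=
    gammaRatio_pos (by linarith [hs.1]) (by linarith [hs.1])
  have hRst : gammaRatio (1 - α) (s + 1) ≤ gammaRatio (1 - α) (t + 1) :=
    monotoneOn_gammaRatio (by linarith) (show s + 1 ∈ Ioi 0 by simp; linarith [hs.1])
      (show t + 1 ∈ Ioi 0 by simp; linarith [ht.1]) (by linarith)
  rw [rhoGamma_eq_div_gammaRatio, rhoGamma_eq_div_gammaRatio]
  calc (s + 1 - α) / gammaRatio (1 - α) (s + 1)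
      < (t + 1 - α) / gammaRatio (1 - α) (s + 1) := div_lt_div_of_pos_right (by linarith) hRs
    _ ≤ (t + 1 - α) / gammaRatio (1 - α) (t + 1) := by
      have := div_le_div_of_nonneg_left (by linarith [ht.2] : 0 ≤ -(t + 1 - α)) hRs hRst
      rwa [neg_div, neg_div, neg_le_neg_iff] at this

theorem strictMonoOn_rhoGamma_Ici (hα : 0 < α) : StrictMonoOn (rhoGamma α) (Ici (α - 1)) := by
  intro s (hs : α - 1 ≤ s) t (ht : α - 1 ≤ t) hst
  rw [rhoGamma_eq_gammaRatio, rhoGamma_eq_gammaRatio]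
  exact strictMonoOn_gammaRatio hα (show (0 : ℝ) ≤ s + 1 - α by linarith)
    (show (0 : ℝ) ≤ t + 1 - α by linarith) (by linarith)

theorem strictMonoOn_rhoGamma (hα : 0 < α) (hα1 : α ≤ 1) :
    StrictMonoOn (rhoGamma α) (Ioi (-1)) := by
  have hlt : (-1 : ℝ) < α - 1 := by linarith
  rw [← Ioc_union_Ici_eq_Ioi hlt]
  exact (strictMonoOn_rhoGamma_Ioc hα1).union (strictMonoOn_rhoGamma_Ici hα) (isGreatest_Ioc hlt)
    isLeast_Ici

theorem tendsto_rhoGamma_nhdsGT_neg_one (hα : 0 < α) (hα1 : α < 1) :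
    Tendsto (rhoGamma α) (𝓝[>] (-1)) atBot := by
  have hshift : Tendsto (· + 1) (𝓝[>] (-1 : ℝ)) (𝓝[>] 0) := by
    have := (map_add_right_nhdsGT (c := (1 : ℝ)) (a := -1)).le
    rwa [neg_add_cancel] at this
  have hnum : Tendsto (fun t : ℝ => t + 1 - α) (𝓝[>] (-1)) (𝓝 (-α)) :=
    tendsto_nhdsWithin_of_tendsto_nhds <| by
      simpa [Function.comp_def] using
        ((continuous_sub_right α).comp (continuous_add_const 1)).tendsto (-1 : ℝ)
  have hden := tendsto_inv_nhdsGT_zero.comp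
    ((tendsto_gammaRatio_nhdsGT_zero (sub_pos.2 hα1)).comp hshift)
  refine (hnum.neg_mul_atTop (neg_neg_of_pos hα) hden).congr fun t => ?_
  rw [rhoGamma_eq_div_gammaRatio, div_eq_mul_inv]
  rfl

theorem tendsto_rhoGamma_atTop (hα : 0 < α) (hα1 : α < 1) :
    Tendsto (rhoGamma α) atTop atTop := by
  refine tendsto_atTop_mono' atTop ?_ (tendsto_rpow_atTop hα)
  filter_upwards [eventually_gt_atTop 0] with t ht
  have := rpow_le_gammaRatio (x := t + 1 - α) hα hα1 (by linarith)
  rwa [show t + 1 - α + α - 1 = t by ring, ← rhoGamma_eq_gammaRatio] at this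

/-- **Strict monotonicity and bijectivity of `ρ`.**  For `0 < α < 1`, the function
`ρ(t) = Γ(t+1)/Γ(t+1-α)` is continuous and strictly increasing on `(-1,∞)`, tends to
`-∞` as `t → -1⁺` and to `+∞` as `t → +∞`; hence it maps `(-1,∞)` bijectively onto `ℝ`,
and for every `λ ∈ ℝ` the equation `ρ(t) = λ` has a unique solution `t = γ(λ) ∈ (-1,∞)`. -/
theorem rhoGamma_strictMono_bijective
    (α : ℝ) (hα : 0 < α) (hα1 : α < 1) :
    ContinuousOn (rhoGamma α) (Set.Ioi (-1 : ℝ)) ∧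
    StrictMonoOn (rhoGamma α) (Set.Ioi (-1 : ℝ)) ∧
    Tendsto (rhoGamma α) (nhdsWithin (-1 : ℝ) (Set.Ioi (-1 : ℝ))) atBot ∧
    Tendsto (rhoGamma α) atTop atTop ∧
    Set.BijOn (rhoGamma α) (Set.Ioi (-1 : ℝ)) Set.univ ∧
    ∀ lam : ℝ, ∃! t : ℝ, t ∈ Set.Ioi (-1 : ℝ) ∧ rhoGamma α t = lam := by
  have hcont := continuousOn_rhoGamma hα1.le
  have hmono := strictMonoOn_rhoGamma hα hα1.le
  have hbot := tendsto_rhoGamma_nhdsGT_neg_one hα hα1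
  have htop := tendsto_rhoGamma_atTop hα hα1
  have hsurj : SurjOn (rhoGamma α) (Ioi (-1)) univ :=
    hcont.surjOn_of_tendsto nonempty_Ioi (hbot.comp (map_coe_Ioi_atBot _).le)
      (htop.comp (tendsto_Ioi_atTop.1 tendsto_id))
  refine ⟨hcont, hmono, hbot, htop, ⟨mapsTo_univ _ _, hmono.injOn, hsurj⟩, fun lam => ?_⟩
  obtain ⟨t, ht, rfl⟩ := hsurj (mem_univ lam)
  exact ⟨t, ⟨ht, rfl⟩, fun u hu => hmono.injOn hu.1 ht hu.2⟩
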